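/- arXiv:math/0104012 — 4 statements merged into one kernel-verified Lean document; each statement's English description precedes it below -/
import Mathlib

section
/- For a positive integer n, the dihedral group E_{2n} of order 2n (DihedralGroup n in Mathlib) is a perfect group if and only if n is an odd perfect number. -/
/-!
The rotations form a cyclic normal subgroup `R` of order `n`. A subgroup of a finite cyclic
normal subgroup is normal, being the set of elements of `R` killed by its order, so the
subgroups of `R` contribute `σ(n)` to `D`. For odd `n`, `2` is invertible modulo `n`, so a normal
subgroup containing one reflection contains all of them and is everything: `D = σ(n) + 2n`,
which is `4n` exactly when `n` is perfect. For even `n`, the kernel of `r i, sr i ↦ i mod 2` is one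
more normal subgroup, of order `n`, and `D ≥ σ(n) + 3n > 4n`.
-/

/-- `D G` is the sum of the orders of all normal subgroups of `G`
(including the trivial subgroup and `G` itself). -/
noncomputable def D (G : Type*) [Group G] : ℕ :=
  ∑ᶠ N ∈ {N : Subgroup G | N.Normal}, Nat.card N

open Finset

theorem Subgroup.pow_card_eq_one_of_mem {G : Type*} [Group G] {H : Subgroup G} {x : G}
    (hx : x ∈ H) : x ^ Nat.card H = 1 :=
  congrArg Subtype.val (pow_card_eq_one' (x := (⟨x, hx⟩ : H)))

namespace IsCyclic

variable {α : Type*} [Group α] [Finite α] [IsCyclic α]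

theorem mem_of_pow_card_eq_one (H : Subgroup α) {x : α} (hx : x ^ Nat.card H = 1) : x ∈ H := by
  classical
  have := Fintype.ofFinite α
  have hsub : (H : Set α).toFinset ⊆ ({a | a ^ Nat.card H = 1} : Finset α) := fun a ha ↦ by
    rw [Set.mem_toFinset] at ha
    exact mem_filter.mpr ⟨mem_univ a, Subgroup.pow_card_eq_one_of_mem ha⟩
  have hle : #{a : α | a ^ Nat.card H = 1} ≤ #(H : Set α).toFinset := by
    rw [Set.toFinset_card, ← Nat.card_eq_fintype_card]
    exact card_pow_eq_one_le Nat.card_pos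
  rw [← SetLike.mem_coe, ← Set.mem_toFinset, eq_of_subset_of_card_le hsub hle]
  exact mem_filter.mpr ⟨mem_univ x, hx⟩

end IsCyclic

namespace Subgroup

variable {G : Type*} [Group G] {C N N' : Subgroup G} [IsCyclic C] [Finite C]

theorem mem_of_le_of_pow_card_eq_one (hN : N ≤ C) {x : G} (hxC : x ∈ C)
    (hx : x ^ Nat.card N = 1) : x ∈ N := by
  refine mem_subgroupOf.mp (IsCyclic.mem_of_pow_card_eq_one (N.subgroupOf C) (x := ⟨x, hxC⟩) ?_)
  rw [Nat.card_congr (subgroupOfEquivOfLe hN).toEquiv]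
  exact Subtype.ext hx

theorem eq_of_le_of_card_eq_of_isCyclic (hN : N ≤ C) (hN' : N' ≤ C)
    (h : Nat.card N = Nat.card N') : N = N' := by
  ext x
  exact ⟨fun hx ↦ mem_of_le_of_pow_card_eq_one hN' (hN hx) (h ▸ pow_card_eq_one_of_mem hx),
    fun hx ↦ mem_of_le_of_pow_card_eq_one hN (hN' hx) (h ▸ pow_card_eq_one_of_mem hx)⟩

theorem exists_le_card_eq {d : ℕ} (hd : d ∣ Nat.card C) : ∃ N ≤ C, Nat.card N = d := by
  obtain ⟨g, hg⟩ := IsCyclic.exists_ofOrder_eq_natCard (α := C)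
  rw [← orderOf_coe] at hg
  refine ⟨zpowers ((g : G) ^ (Nat.card C / d)), zpowers_le.mpr (C.pow_mem g.2 _), ?_⟩
  rw [Nat.card_zpowers, ← hg, orderOf_pow_orderOf_div (hg ▸ Nat.card_pos.ne') (hg ▸ hd)]

theorem finsum_mem_card_le_eq_sum_divisors (C : Subgroup G) [IsCyclic C] [Finite C] :
    ∑ᶠ N ∈ {N : Subgroup G | N ≤ C}, Nat.card N = ∑ d ∈ (Nat.card C).divisors, d := by
  rw [← finsum_mem_coe_finset]
  refine finsum_mem_eq_of_bijOn (fun N ↦ Nat.card N) ⟨?_, ?_, ?_⟩ fun _ _ ↦ rfl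
  · intro N hN
    exact Nat.mem_divisors.mpr ⟨card_dvd_of_le hN, Nat.card_pos.ne'⟩
  · exact fun N hN N' hN' h ↦ eq_of_le_of_card_eq_of_isCyclic hN hN' h
  · intro d hd
    exact exists_le_card_eq (Nat.mem_divisors.mp hd).1

theorem normal_of_le_of_isCyclic [C.Normal] (hN : N ≤ C) : N.Normal where
  conj_mem x hx g := by
    refine mem_of_le_of_pow_card_eq_one hN (Normal.conj_mem ‹_› x (hN hx) g) ?_
    rw [conj_pow, pow_card_eq_one_of_mem hx, mul_one, mul_inv_cancel]

end Subgroup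

theorem Nat.lt_sum_divisors {n : ℕ} (hn : 1 < n) : n < ∑ d ∈ n.divisors, d := by
  have := single_le_sum (f := fun d ↦ d) (fun _ _ ↦ Nat.zero_le _)
    (Nat.one_mem_properDivisors_iff_one_lt.mpr hn)
  rw [Nat.sum_divisors_eq_sum_properDivisors_add_self]
  omega

namespace DihedralGroup

open Subgroup

variable {n : ℕ}

variable (n) in
def rotations : Subgroup (DihedralGroup n) := zpowers (r 1)

instance : IsCyclic (rotations n) := isCyclic_zpowers _

theorem r_mem_rotations (i : ZMod n) : r i ∈ rotations n :=
  ⟨(i.cast : ℤ), by simp only [r_one_zpow, ZMod.intCast_zmod_cast]⟩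

theorem sr_notMem_rotations (i : ZMod n) : sr i ∉ rotations n := by
  rintro ⟨k, hk⟩
  simp at hk

theorem top_not_le_rotations : ¬(⊤ : Subgroup (DihedralGroup n)) ≤ rotations n :=
  fun h ↦ sr_notMem_rotations 0 (h (mem_top _))

theorem card_rotations : Nat.card (rotations n) = n := by
  rw [rotations, Nat.card_zpowers, orderOf_r_one]

theorem index_rotations [NeZero n] : (rotations n).index = 2 := by
  have h := (rotations n).card_mul_index
  rw [card_rotations, nat_card, mul_comm 2] at h
  exact Nat.eq_of_mul_eq_mul_left (Nat.pos_of_neZero n) h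

instance [NeZero n] : (rotations n).Normal := normal_of_index_eq_two index_rotations

theorem eq_top_of_sr_mem (hn : Odd n) {N : Subgroup (DihedralGroup n)} (hN : N.Normal) {i : ZMod n}
    (hi : sr i ∈ N) : N = ⊤ := by
  obtain ⟨u, hu⟩ : ∃ u : ZMod n, 2 * u = 1 := IsUnit.exists_right_inv <| by
    exact_mod_cast (ZMod.isUnit_iff_coprime 2 n).mpr (Nat.coprime_two_left.mpr hn)
  have hsr (k : ZMod n) : sr k ∈ N := by
    have := hN.conj_mem _ hi (r (u * (i - k)))
    rw [inv_r, r_mul_sr, sr_mul_r] at this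
    convert this using 2
    linear_combination (i - k) * hu
  rw [eq_top_iff]
  rintro (k | k) -
  · simpa [sr_mul_sr] using N.mul_mem (hsr 0) (hsr k)
  · exact hsr k

def parity (h : 2 ∣ n) : DihedralGroup n →* Multiplicative (ZMod 2) where
  toFun
    | r i => .ofAdd (ZMod.castHom h (ZMod 2) i)
    | sr i => .ofAdd (ZMod.castHom h (ZMod 2) i)
  map_one' := congrArg Multiplicative.ofAdd (map_zero _)
  map_mul' := by
    rintro (i | i) (j | j) <;>
      simp only [r_mul_r, r_mul_sr, sr_mul_r, sr_mul_sr, ← ofAdd_add, map_add,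
        sub_eq_add_neg, map_neg, ZMod.neg_eq_self_mod_two, add_comm]

theorem sr_zero_mem_ker_parity (h : 2 ∣ n) : sr 0 ∈ (parity h).ker := by
  simp [parity]

theorem ker_parity_ne_top (h : 2 ∣ n) : (parity h).ker ≠ ⊤ := by
  intro htop
  have : r 1 ∈ (parity h).ker := htop ▸ mem_top _
  simp [parity, ZMod.cast_one h] at this

theorem le_card_ker_parity (h : 2 ∣ n) : n ≤ Nat.card (parity h).ker := by
  have hidx : (parity h).ker.index ≤ 2 := by
    rw [index_ker]
    exact (Nat.card_mono (Set.toFinite _) (Set.subset_univ _)).trans_eq (by simp)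
  have := (parity h).ker.card_mul_index
  rw [nat_card] at this
  nlinarith

theorem D_eq [NeZero n] : D (DihedralGroup n) = ∑ d ∈ n.divisors, d +
    ∑ᶠ N ∈ {N : Subgroup (DihedralGroup n) | N.Normal ∧ ¬N ≤ rotations n}, Nat.card N := by
  have hsub : {N : Subgroup (DihedralGroup n) | N ≤ rotations n} ⊆ {N | N.Normal} :=
    fun _ hN ↦ normal_of_le_of_isCyclic hN
  rw [D, ← finsum_mem_add_sdiff hsub (Set.toFinite _), finsum_mem_card_le_eq_sum_divisors,
    card_rotations]
  rfl

theorem D_eq_of_odd (hn : Odd n) : D (DihedralGroup n) = ∑ d ∈ n.divisors, d + 2 * n := by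
  have : NeZero n := ⟨hn.pos.ne'⟩
  have htop : {N : Subgroup (DihedralGroup n) | N.Normal ∧ ¬N ≤ rotations n} = {⊤} := by
    ext N
    refine ⟨fun ⟨hN, hle⟩ ↦ ?_, ?_⟩
    · obtain ⟨x, hxN, hx⟩ := SetLike.not_le_iff_exists.mp hle
      cases x with
      | r i => exact absurd (r_mem_rotations i) hx
      | sr i => exact eq_top_of_sr_mem hn hN hxN
    · rintro rfl
      exact ⟨inferInstance, top_not_le_rotations⟩
  rw [D_eq, htop, finsum_mem_singleton, card_top, nat_card]

theorem D_ge_of_even [NeZero n] (hn : Even n) :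
    ∑ d ∈ n.divisors, d + 3 * n ≤ D (DihedralGroup n) := by
  have hsub : {⊤, (parity hn.two_dvd).ker} ⊆ {N : Subgroup (DihedralGroup n) | N.Normal ∧ ¬N ≤ rotations n} := by
    rintro N (rfl | rfl)
    · exact ⟨inferInstance, top_not_le_rotations⟩
    · exact ⟨inferInstance, fun h ↦ sr_notMem_rotations 0 (h (sr_zero_mem_ker_parity _))⟩
  rw [D_eq, ← finsum_mem_add_sdiff hsub (Set.toFinite _),
    finsum_mem_pair (ker_parity_ne_top _).symm, card_top, nat_card]
  have := le_card_ker_parity hn.two_dvd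
  omega

end DihedralGroup

/-- The dihedral group of order `2n` is a perfect group iff `n` is an odd perfect number. -/
theorem stmt_6 (n : ℕ) (hn : 0 < n) :
    D (DihedralGroup n) = 2 * Nat.card (DihedralGroup n) ↔ Odd n ∧ Nat.Perfect n := by
  have : NeZero n := ⟨hn.ne'⟩
  rw [DihedralGroup.nat_card, Nat.perfect_iff_sum_divisors_eq_two_mul hn]
  rcases Nat.even_or_odd n with he | ho
  · have hD := DihedralGroup.D_ge_of_even he
    have hσ := Nat.lt_sum_divisors (n := n) (by obtain ⟨k, rfl⟩ := he; omega)
    simp only [Nat.not_odd_iff_even.mpr he, false_and, iff_false]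
    omega
  · rw [DihedralGroup.D_eq_of_odd ho]
    simp only [ho, true_and]
    omega
end

section
/- The group A₅ × C₁₅₁₂₈ (the direct product of the alternating group on 5 letters and the cyclic group of order 15128), of order 907680, is a perfect group: D(A₅ × C₁₅₁₂₈) = 2·907680. -/
/-!
Let `G` be simple and perfect. For a normal subgroup `N` of `G × C`, the projection of `N` to `G`
is normal, hence `⊥` or `⊤`. If it is `⊤`, then `N` contains the commutators
`⁅(a, c), (g, 1)⁆ = (⁅a, g⁆, 1)`, hence `G × 1`. Either way `N = H × K` with `H ∈ {⊥, ⊤}` and `K`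
normal in `C`, so `D (G × C) = (1 + |G|) · D C`. In a cyclic group of order `n` there is exactly
one subgroup of each order `d ∣ n`, so `D C = σ₁(n)`. Since `|A₅| = 60` and
`σ₁(15128) = 29760`, this gives `D (A₅ × C₁₅₁₂₈) = 61 · 29760 = 2 · 907680`.
-/

open scoped commutatorElement ArithmeticFunction.sigma

namespace IsCyclic

variable {G : Type*} [CommGroup G] [IsCyclic G] [Finite G]

theorem eq_ker_powMonoidHom_card (K : Subgroup G) :
    K = (powMonoidHom (Nat.card K) : G →* G).ker := by
  refine Subgroup.eq_of_le_of_card_ge (fun x hx => ?_) ?_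
  · rw [MonoidHom.mem_ker, powMonoidHom_apply]
    exact congrArg Subtype.val (pow_card_eq_one' (x := (⟨x, hx⟩ : K)))
  · rw [card_powMonoidHom_ker, Nat.gcd_eq_right (Subgroup.card_subgroup_dvd_card K)]

theorem finsum_card_subgroup : ∑ᶠ K : Subgroup G, Nat.card K = σ 1 (Nat.card G) := by
  rw [ArithmeticFunction.sigma_one_apply, ← finsum_mem_coe_finset, ← finsum_mem_univ]
  refine finsum_mem_eq_of_bijOn (fun K : Subgroup G => Nat.card K)
    ⟨fun K _ => ?_, fun K _ L _ h => ?_, fun d hd => ⟨(powMonoidHom d : G →* G).ker, trivial, ?_⟩⟩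
    fun _ _ => rfl
  · exact Nat.mem_divisors.2 ⟨Subgroup.card_subgroup_dvd_card K, Nat.card_pos.ne'⟩
  · rw [eq_ker_powMonoidHom_card K, eq_ker_powMonoidHom_card L, show Nat.card K = Nat.card L from h]
  · exact (card_powMonoidHom_ker G d).trans (Nat.gcd_eq_right (Nat.mem_divisors.1 hd).1)

end IsCyclic

namespace Subgroup

variable {G C : Type*} [Group G] [Group C]

theorem card_prod (H : Subgroup G) (K : Subgroup C) :
    Nat.card (H.prod K) = Nat.card H * Nat.card K := by
  rw [Nat.card_congr (prodEquiv H K).toEquiv, Nat.card_prod]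

theorem prod_right_injective (H : Subgroup G) :
    Function.Injective (H.prod : Subgroup C → Subgroup (G × C)) := by
  intro K L h
  ext c
  simpa [mem_prod] using SetLike.ext_iff.1 h (1, c)

theorem Normal.commutator_map_fst_prod_bot_le {N : Subgroup (G × C)} (hN : N.Normal) :
    prod ⁅N.map (MonoidHom.fst G C), ⊤⁆ ⊥ ≤ N := by
  have hle : ⁅N.map (MonoidHom.fst G C), ⊤⁆ ≤ N.comap (MonoidHom.inl G C) := by
    rw [commutator_le]
    rintro _ ⟨⟨a, c⟩, hn, rfl⟩ g -
    have hinl : MonoidHom.inl G C ⁅a, g⁆ = ⁅(a, c), (g, 1)⁆ := by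
      ext <;> simp [commutatorElement_def]
    rw [mem_comap, MonoidHom.coe_fst, hinl]
    exact commutator_le_left N ⊤ (commutator_mem_commutator hn (mem_top _))
  rw [prod_le_iff, map_bot]
  exact ⟨map_le_iff_le_comap.2 hle, bot_le⟩

theorem eq_prod_map_of_map_fst_prod_bot_le {N : Subgroup (G × C)}
    (h : (N.map (MonoidHom.fst G C)).prod ⊥ ≤ N) :
    N = (N.map (MonoidHom.fst G C)).prod (N.map (MonoidHom.snd G C)) := by
  refine le_antisymm (le_prod_iff.2 ⟨le_rfl, le_rfl⟩) ?_
  rintro ⟨g, c⟩ hgc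
  obtain ⟨hg, ⟨a, c⟩, hn, rfl⟩ := mem_prod.1 hgc
  have hg' : (g * a⁻¹, (1 : C)) ∈ N :=
    h (mem_prod.2 ⟨mul_mem hg (inv_mem ⟨(a, c), hn, rfl⟩), one_mem _⟩)
  simpa using mul_mem hg' hn

theorem Normal.eq_bot_prod_or_eq_top_prod [IsSimpleGroup G] (hG : _root_.commutator G = ⊤)
    {N : Subgroup (G × C)} (hN : N.Normal) :
    N = (⊥ : Subgroup G).prod (N.map (MonoidHom.snd G C)) ∨
      N = (⊤ : Subgroup G).prod (N.map (MonoidHom.snd G C)) := by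
  rcases (hN.map (MonoidHom.fst G C) Prod.fst_surjective).eq_bot_or_eq_top with h | h
  · left
    rw [← h]
    refine eq_prod_map_of_map_fst_prod_bot_le ?_
    rw [h, bot_prod_bot]
    exact bot_le
  · right
    rw [← h]
    refine eq_prod_map_of_map_fst_prod_bot_le ?_
    have hle := hN.commutator_map_fst_prod_bot_le
    rwa [h, ← _root_.commutator_def, hG, ← h] at hle

end Subgroup

theorem D_eq_finsum_card_subgroup (G : Type*) [CommGroup G] :
    D G = ∑ᶠ K : Subgroup G, Nat.card K := by
  have hnormal : {N : Subgroup G | N.Normal} = Set.univ :=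
    Set.eq_univ_of_forall fun K => K.normal_of_isMulCommutative
  rw [D, hnormal, finsum_mem_univ]

section SimplePerfectProd

variable {G C : Type*} [Group G] [Group C] [IsSimpleGroup G]

theorem setOf_normal_prod_eq (hG : commutator G = ⊤) :
    {N : Subgroup (G × C) | N.Normal} =
      (⊥ : Subgroup G).prod '' {K | K.Normal} ∪ (⊤ : Subgroup G).prod '' {K | K.Normal} := by
  ext N
  refine ⟨fun hN => ?_, ?_⟩
  · have hK : (N.map (MonoidHom.snd G C)).Normal := hN.map (MonoidHom.snd G C) Prod.snd_surjective
    rcases hN.eq_bot_prod_or_eq_top_prod hG with h | h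
    · exact Or.inl ⟨_, hK, h.symm⟩
    · exact Or.inr ⟨_, hK, h.symm⟩
  · rintro (⟨K, hK, rfl⟩ | ⟨K, hK, rfl⟩) <;> exact Subgroup.prod_normal _ K (hK := hK)

theorem D_prod_of_isSimpleGroup (hG : commutator G = ⊤) [Finite C] :
    D (G × C) = (1 + Nat.card G) * D C := by
  have hdisj : Disjoint ((⊥ : Subgroup G).prod '' {K : Subgroup C | K.Normal})
      ((⊤ : Subgroup G).prod '' {K | K.Normal}) := by
    rw [Set.disjoint_left]
    rintro _ ⟨K, -, rfl⟩ ⟨L, -, hL⟩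
    obtain ⟨g, hg⟩ := exists_ne (1 : G)
    have hmem : (g, (1 : C)) ∈ (⊥ : Subgroup G).prod K :=
      hL ▸ Subgroup.mem_prod.2 ⟨Subgroup.mem_top g, one_mem L⟩
    exact hg (Subgroup.mem_bot.1 (Subgroup.mem_prod.1 hmem).1)
  rw [D, setOf_normal_prod_eq hG, finsum_mem_union hdisj (Set.toFinite _) (Set.toFinite _),
    finsum_mem_image (Subgroup.prod_right_injective _).injOn,
    finsum_mem_image (Subgroup.prod_right_injective _).injOn]
  simp only [Subgroup.card_prod, Subgroup.card_bot, Subgroup.card_top, one_mul, ← mul_finsum_mem,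
    D]
  ring

end SimplePerfectProd

set_option maxRecDepth 100000 in
theorem sigma_one_15128 : σ 1 15128 = 29760 := by
  rw [ArithmeticFunction.sigma_one_apply]
  decide

/-- The group `A₅ × C₁₅₁₂₈`, of order 907680, is a perfect group. -/
theorem stmt_10 :
    D (alternatingGroup (Fin 5) × Multiplicative (ZMod 15128)) = 2 * 907680 ∧
      Nat.card (alternatingGroup (Fin 5) × Multiplicative (ZMod 15128)) = 907680 := by
  have : IsSimpleGroup (alternatingGroup (Fin 5)) := alternatingGroup.isSimpleGroup (by simp)
  have hA : Nat.card (alternatingGroup (Fin 5)) = 60 := by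
    rw [nat_card_alternatingGroup, Nat.card_fin]
    rfl
  have hC : Nat.card (Multiplicative (ZMod 15128)) = 15128 := by
    rw [Nat.card_congr Multiplicative.toAdd, Nat.card_zmod]
  refine ⟨?_, by rw [Nat.card_prod, hA, hC]⟩
  rw [D_prod_of_isSimpleGroup (commutator_alternatingGroup_eq_top (by simp)),
    D_eq_finsum_card_subgroup, IsCyclic.finsum_card_subgroup, hA, hC, sigma_one_15128]
end

section
/- Abelian Quotient Theorem: if G is a finite group with D(G) ≤ 2·|G|, then every abelian quotient of G is cyclic; that is, for every normal subgroup K of G such that the quotient group G/K is commutative, G/K is cyclic. -/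
/-! If `G ⧸ K` is abelian but not cyclic, two cyclic factors in its decomposition have orders
sharing a prime `p`, so `G` maps onto `Q = 𝔽_p × 𝔽_p`. Pulling normal subgroups back along a
surjection `f : G → Q` multiplies their orders by `|ker f|`, hence `|ker f| · D(Q) ≤ D(G)`. In `Q`,
the trivial subgroup, `Q` itself and the `p` lines spanned by `(1, c)` already give
`D(Q) ≥ 1 + p² + p·p > 2|Q|`, so `D(G) > 2|G|`. -/

open Function

theorem isCyclic_pi_multiplicative_zmod {ι : Type*} [Fintype ι] {n : ι → ℕ}
    (hn : Pairwise (Nat.Coprime on n)) : IsCyclic (∀ i, Multiplicative (ZMod (n i))) :=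
  (AddEquiv.toMultiplicative (ZMod.prodEquivPi n hn).toAddEquiv |>.trans
    (MulEquiv.piMultiplicative _)).isCyclic.mp inferInstance

theorem exists_surjective_zmod_prod_of_dvd {ι : Type*} [DecidableEq ι] {n : ι → ℕ} {p : ℕ}
    {i j : ι} (hij : i ≠ j) (hi : p ∣ n i) (hj : p ∣ n j) :
    ∃ g : (∀ k, ZMod (n k)) →+ ZMod p × ZMod p, Surjective g := by
  refine ⟨((ZMod.castHom hi (ZMod p)).toAddMonoidHom.comp (Pi.evalAddMonoidHom _ i)).prod
    ((ZMod.castHom hj (ZMod p)).toAddMonoidHom.comp (Pi.evalAddMonoidHom _ j)), ?_⟩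
  rintro ⟨a, b⟩
  obtain ⟨a', rfl⟩ := ZMod.castHom_surjective hi a
  obtain ⟨b', rfl⟩ := ZMod.castHom_surjective hj b
  exact ⟨Pi.single i a' + Pi.single j b', by simp [hij, hij.symm]⟩

theorem exists_surjective_multiplicative_zmod_prod_of_not_isCyclic {A : Type*} [CommGroup A]
    [Finite A] (h : ¬IsCyclic A) :
    ∃ p, p.Prime ∧ ∃ f : A →* Multiplicative (ZMod p × ZMod p), Surjective f := by
  classical
  obtain ⟨ι, _, n, -, ⟨e⟩⟩ := CommGroup.equiv_prod_multiplicative_zmod_of_finite A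
  have hn : ¬Pairwise (Nat.Coprime on n) := fun hcop =>
    h (e.isCyclic.mpr (isCyclic_pi_multiplicative_zmod hcop))
  obtain ⟨i, j, hij, hnij⟩ : ∃ i j, i ≠ j ∧ ¬(n i).Coprime (n j) := by
    simpa [Pairwise] using hn
  obtain ⟨p, hp, hpi, hpj⟩ := Nat.Prime.not_coprime_iff_dvd.mp hnij
  obtain ⟨g, hg⟩ := exists_surjective_zmod_prod_of_dvd hij hpi hpj
  let e' := e.trans (MulEquiv.piMultiplicative _).symm
  exact ⟨p, hp, (AddMonoidHom.toMultiplicative g).comp e'.toMonoidHom, hg.comp e'.surjective⟩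

section NormalSubgroupSums

variable {G : Type*} [Group G]

theorem sum_card_le_D [Finite G] (s : Finset (Subgroup G)) (hs : ∀ N ∈ s, N.Normal) :
    ∑ N ∈ s, Nat.card N ≤ D G := by
  have hfin : {N : Subgroup G | N.Normal}.Finite := Set.toFinite _
  rw [D, finsum_mem_eq_finite_toFinset_sum _ hfin]
  exact Finset.sum_le_sum_of_subset fun N hN => hfin.mem_toFinset.mpr (hs N hN)

variable {Q : Type*} [Group Q] {f : G →* Q}

theorem card_ker_mul_card_of_surjective (hf : Surjective f) :
    Nat.card f.ker * Nat.card Q = Nat.card G := by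
  rw [← f.ker.card_mul_index, Subgroup.index_ker, MonoidHom.range_eq_top.mpr hf,
    Subgroup.card_top]

theorem card_comap_of_surjective [Finite G] (hf : Surjective f) (H : Subgroup Q) :
    Nat.card (H.comap f) = Nat.card f.ker * Nat.card H := by
  have : Finite Q := Finite.of_surjective f hf
  refine Nat.eq_of_mul_eq_mul_right (Nat.pos_of_ne_zero H.index_ne_zero_of_finite) ?_
  rw [← Subgroup.index_comap_of_surjective H hf, Subgroup.card_mul_index,
    Subgroup.index_comap_of_surjective H hf, mul_assoc, H.card_mul_index,
    card_ker_mul_card_of_surjective hf]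

theorem card_ker_mul_D_le_D [Finite G] (hf : Surjective f) : Nat.card f.ker * D Q ≤ D G := by
  classical
  have : Finite Q := Finite.of_surjective f hf
  have hfin : {H : Subgroup Q | H.Normal}.Finite := Set.toFinite _
  rw [D, finsum_mem_eq_finite_toFinset_sum _ hfin, Finset.mul_sum]
  calc ∑ H ∈ hfin.toFinset, Nat.card f.ker * Nat.card H
      = ∑ N ∈ hfin.toFinset.image (Subgroup.comap f), Nat.card N := by
        rw [Finset.sum_image fun H _ H' _ h => Subgroup.comap_injective hf h]
        exact Finset.sum_congr rfl fun H _ => (card_comap_of_surjective hf H).symm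
    _ ≤ D G := by
        refine sum_card_le_D _ fun N hN => ?_
        obtain ⟨H, hH, rfl⟩ := Finset.mem_image.mp hN
        exact (hfin.mem_toFinset.mp hH).comap f

end NormalSubgroupSums

section ZModProdLines

variable {p : ℕ} [Fact p.Prime]

theorem card_zpowers_ofAdd_one_mk (c : ZMod p) :
    Nat.card (Subgroup.zpowers (Multiplicative.ofAdd ((1 : ZMod p), c))) = p := by
  rw [Nat.card_zpowers]
  refine orderOf_eq_prime ?_ ?_
  · rw [← ofAdd_nsmul]
    simp
  · simp

theorem zpowers_ofAdd_one_mk_injective :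
    Injective fun c : ZMod p => Subgroup.zpowers (Multiplicative.ofAdd ((1 : ZMod p), c)) := by
  intro c c' h
  simp only at h
  have hmem : Multiplicative.ofAdd ((1 : ZMod p), c) ∈
      Subgroup.zpowers (Multiplicative.ofAdd ((1 : ZMod p), c')) :=
    h ▸ Subgroup.mem_zpowers _
  obtain ⟨k, hk⟩ := Subgroup.mem_zpowers_iff.mp hmem
  rw [← ofAdd_zsmul] at hk
  simp only [Prod.smul_mk, zsmul_eq_mul, mul_one, EmbeddingLike.apply_eq_iff_eq, Prod.ext_iff] at hk
  obtain ⟨hk1, hkc⟩ := hk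
  rw [← hkc, hk1, one_mul]

theorem two_mul_card_lt_D_multiplicative_zmod_prod :
    2 * Nat.card (Multiplicative (ZMod p × ZMod p)) < D (Multiplicative (ZMod p × ZMod p)) := by
  classical
  set L := fun c : ZMod p => Subgroup.zpowers (Multiplicative.ofAdd ((1 : ZMod p), c))
  have hp := (Fact.out : p.Prime).two_le
  have hQ : Nat.card (Multiplicative (ZMod p × ZMod p)) = p * p := by simp
  have hL : ∀ c, Nat.card (L c) = p := card_zpowers_ofAdd_one_mk
  have hbot : ⊥ ∉ insert ⊤ (Finset.univ.image L) := by
    simp only [Finset.mem_insert, Finset.mem_image]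
    rintro (h | ⟨c, -, h⟩)
    · exact bot_ne_top h
    · simpa using Subgroup.zpowers_eq_bot.mp h
  have htop : ⊤ ∉ Finset.univ.image L := by
    rintro h
    obtain ⟨c, -, h⟩ := Finset.mem_image.mp h
    have hcard := congrArg (fun N : Subgroup (Multiplicative (ZMod p × ZMod p)) => Nat.card N) h
    rw [Subgroup.card_top, hL, hQ] at hcard
    nlinarith
  have hsum := sum_card_le_D (insert ⊥ (insert ⊤ (Finset.univ.image L)))
    fun N _ => Subgroup.normal_of_isMulCommutative N
  rw [Finset.sum_insert hbot, Finset.sum_insert htop,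
    Finset.sum_image fun c _ c' _ h => zpowers_ofAdd_one_mk_injective h] at hsum
  simp only [Subgroup.card_bot, Subgroup.card_top, hQ, card_zpowers_ofAdd_one_mk,
    Finset.sum_const, Finset.card_univ, ZMod.card, smul_eq_mul] at hsum
  omega

end ZModProdLines

/-- Abelian quotient theorem: if `G` is a finite group with `D G ≤ 2·|G|`, then
every abelian quotient of `G` is cyclic. -/
theorem stmt_12 (G : Type*) [Group G] [Finite G] (hD : D G ≤ 2 * Nat.card G)
    (K : Subgroup G) [K.Normal]
    (hab : ∀ x y : G ⧸ K, x * y = y * x) :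
    IsCyclic (G ⧸ K) := by
  by_contra hK
  let : CommGroup (G ⧸ K) := { mul_comm := hab }
  obtain ⟨p, hp, f, hf⟩ := exists_surjective_multiplicative_zmod_prod_of_not_isCyclic hK
  have : Fact p.Prime := ⟨hp⟩
  set φ := f.comp (QuotientGroup.mk' K)
  have hφ : Surjective φ := hf.comp (QuotientGroup.mk'_surjective K)
  have hker : 0 < Nat.card φ.ker := Nat.card_pos
  have hDG : 2 * Nat.card G < D G := calc
    2 * Nat.card G = Nat.card φ.ker * (2 * Nat.card (Multiplicative (ZMod p × ZMod p))) := by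
      rw [← card_ker_mul_card_of_surjective hφ]; ring
    _ < Nat.card φ.ker * D (Multiplicative (ZMod p × ZMod p)) :=
      Nat.mul_lt_mul_of_pos_left two_mul_card_lt_D_multiplicative_zmod_prod hker
    _ ≤ D G := card_ker_mul_D_le_D hφ
  exact hD.not_gt hDG
end

section
/- If G is a finite group with D(G) ≤ 2·|G|, then for each prime p, G has at most one normal subgroup of index p: any two normal subgroups of G of index p are equal. -/
lemma Subgroup.eq_of_le_of_index_eq {G : Type*} [Group G] {H K : Subgroup G} (hle : H ≤ K)
    (h : H.index = K.index) (hK : K.index ≠ 0) : H = K := by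
  refine le_antisymm hle (Subgroup.relIndex_eq_one.mp ?_)
  have := Subgroup.relIndex_mul_index hle
  rw [h] at this
  exact (Nat.mul_eq_right hK).mp this

lemma Subgroup.exists_monoidHom_ker_eq_of_index_eq_prime {G : Type*} [Group G] {p : ℕ}
    [Fact p.Prime] {N : Subgroup G} (hN : N.Normal) (hNp : N.index = p) :
    ∃ f : G →* Multiplicative (ZMod p), f.ker = N := by
  have hcard : Nat.card (G ⧸ N) = p := by rw [← Subgroup.index_eq_card, hNp]
  have : IsCyclic (G ⧸ N) := isCyclic_of_prime_card hcard
  obtain e : (G ⧸ N) ≃* Multiplicative (ZMod p) := hcard ▸ (zmodCyclicMulEquiv this).symm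
  refine ⟨(e : G ⧸ N →* Multiplicative (ZMod p)).comp (QuotientGroup.mk' N), ?_⟩
  rw [MonoidHom.ker_mulEquiv_comp, QuotientGroup.ker_mk']

lemma MonoidHom.index_ker_eq_of_ne_one {G H : Type*} [Group G] [Group H] {p : ℕ} (hp : p.Prime)
    (hH : Nat.card H = p) {f : G →* H} (hf : f ≠ 1) : f.ker.index = p := by
  rw [Subgroup.index_ker]
  have hdvd : Nat.card f.range ∣ p := hH ▸ Subgroup.card_subgroup_dvd_card _
  refine ((Nat.dvd_prime hp).mp hdvd).resolve_left ?_
  rwa [Subgroup.card_eq_one, MonoidHom.range_eq_bot_iff]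

lemma MonoidHom.ker_mul_pow_inf_ker_mul_pow_le {G : Type*} [Group G] {p : ℕ} [Fact p.Prime]
    (f f' : G →* Multiplicative (ZMod p)) {a b : ZMod p} (hab : a ≠ b) :
    (f * f' ^ a.val).ker ⊓ (f * f' ^ b.val).ker ≤ f'.ker := by
  intro x hx
  obtain ⟨ha, hb⟩ := Subgroup.mem_inf.mp hx
  simp only [MonoidHom.mem_ker, MonoidHom.mul_apply, MonoidHom.pow_apply] at ha hb ⊢
  have hpow : f' x ^ a.val = f' x ^ b.val := mul_left_cancel (ha.trans hb.symm)
  have key : a = b ∨ f' x = 1 := by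
    simpa only [toAdd_pow, nsmul_eq_mul, ZMod.natCast_val, ZMod.cast_id', id_eq,
      mul_eq_mul_right_iff, toAdd_eq_zero] using congrArg Multiplicative.toAdd hpow
  exact key.resolve_left hab

theorem exists_finset_normal_index_eq_card_succ_of_ne {G : Type*} [Group G] {p : ℕ}
    (hp : p.Prime) {N N' : Subgroup G} (hN : N.Normal) (hN' : N'.Normal) (hNp : N.index = p)
    (hN'p : N'.index = p) (hne : N ≠ N') :
    ∃ S : Finset (Subgroup G), S.card = p + 1 ∧ ∀ H ∈ S, H.Normal ∧ H.index = p := by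
  classical
  have : Fact p.Prime := ⟨hp⟩
  have hp0 := hp.ne_zero
  obtain ⟨f, rfl⟩ := Subgroup.exists_monoidHom_ker_eq_of_index_eq_prime hN hNp
  obtain ⟨f', rfl⟩ := Subgroup.exists_monoidHom_ker_eq_of_index_eq_prime hN' hN'p
  obtain ⟨g, hg', hg⟩ : ∃ g ∈ f'.ker, g ∉ f.ker := SetLike.not_le_iff_exists.mp fun hle =>
    hne (Subgroup.eq_of_le_of_index_eq hle (hN'p.trans hNp.symm) (by omega)).symm
  rw [MonoidHom.mem_ker] at hg hg'
  set M : ZMod p → Subgroup G := fun a : ZMod p => (f * f' ^ a.val).ker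
  have hMg : ∀ a : ZMod p, (f * f' ^ a.val) g = f g := by simp [hg']
  have hMp : ∀ a, (M a).index = p := fun a =>
    MonoidHom.index_ker_eq_of_ne_one hp (by simp) fun h => hg (by rw [← hMg a, h, MonoidHom.one_apply])
  have hMN' : ∀ a, M a ≠ f'.ker := fun a h => by
    have hgM : g ∈ M a := h ▸ MonoidHom.mem_ker.mpr hg'
    exact hg (hMg a ▸ MonoidHom.mem_ker.mp hgM)
  have hMinj : Function.Injective M := fun a b hab => by
    by_contra hne
    have hle : M a ⊓ M b ≤ f'.ker := MonoidHom.ker_mul_pow_inf_ker_mul_pow_le f f' hne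
    rw [← hab, inf_idem] at hle
    exact hMN' a (Subgroup.eq_of_le_of_index_eq hle ((hMp a).trans hN'p.symm) (by omega))
  refine ⟨insert f'.ker (Finset.univ.image M), ?_, ?_⟩
  · rw [Finset.card_insert_of_notMem (by simpa using fun a => hMN' a),
      Finset.card_image_of_injective _ hMinj, Finset.card_univ, ZMod.card]
  · simp only [Finset.mem_insert, Finset.mem_image, Finset.mem_univ, true_and]
    rintro H (rfl | ⟨a, rfl⟩)
    · exact ⟨hN', hN'p⟩
    · exact ⟨MonoidHom.normal_ker _, hMp a⟩

lemma sum_card_le_D_s18 {G : Type*} [Group G] [Finite G] {S : Finset (Subgroup G)}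
    (hS : ∀ H ∈ S, H.Normal) : ∑ H ∈ S, Nat.card H ≤ D G := by
  have hfin : {N : Subgroup G | N.Normal}.Finite := Set.toFinite _
  rw [D, finsum_mem_eq_finite_toFinset_sum _ hfin]
  exact Finset.sum_le_sum_of_subset fun H hH => hfin.mem_toFinset.mpr (hS H hH)

lemma two_mul_card_lt_D_of_normal_index_eq {G : Type*} [Group G] [Finite G] {p : ℕ}
    (hp : 1 < p) {S : Finset (Subgroup G)} (hS : p < S.card)
    (hSp : ∀ H ∈ S, H.Normal ∧ H.index = p) : 2 * Nat.card G < D G := by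
  classical
  have htop : ⊤ ∉ S := fun h => by
    have := (hSp ⊤ h).2
    rw [Subgroup.index_top] at this
    omega
  have hle : Nat.card G + ∑ H ∈ S, Nat.card H ≤ D G := by
    have := sum_card_le_D_s18 (S := insert ⊤ S) (by simpa using fun H hH => (hSp H hH).1)
    rwa [Finset.sum_insert htop, Subgroup.card_top] at this
  have hsum : (∑ H ∈ S, Nat.card H) * p = S.card * Nat.card G := by
    rw [Finset.sum_mul, Finset.card_eq_sum_ones, Finset.sum_mul]
    refine Finset.sum_congr rfl fun H hH => ?_
    rw [← (hSp H hH).2, Subgroup.card_mul_index, one_mul]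
  have hG : 0 < Nat.card G := Nat.card_pos
  nlinarith

/-- If `D G ≤ 2·|G|`, then for each prime `p`, `G` has at most one normal subgroup
of index `p`. -/
theorem stmt_18 (G : Type*) [Group G] [Finite G] (hD : D G ≤ 2 * Nat.card G)
    (p : ℕ) (hp : p.Prime) (N N' : Subgroup G) (hN : N.Normal) (hN' : N'.Normal)
    (hNp : N.index = p) (hN'p : N'.index = p) :
    N = N' := by
  by_contra hne
  obtain ⟨S, hS, hSp⟩ := exists_finset_normal_index_eq_card_succ_of_ne hp hN hN' hNp hN'p hne
  exact (two_mul_card_lt_D_of_normal_index_eq hp.one_lt (hS ▸ p.lt_succ_self) hSp).not_ge hD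
end
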